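/- arXiv:2207.03609 — 6 statements merged into one kernel-verified Lean document; each statement's English description precedes it below -/
import Mathlib

section
/- Let S be an m × n selection matrix with n ≥ m+1. Suppose that for every subset I ⊆ [m] of row indices, there exists i* ∈ I such that S[j, p_{i*}] = 0 for all j ∈ I \ {i*} or S[j, q_{i*}] = 0 for all j ∈ I \ {i*}. Then there exists an m × m permutation matrix P such that P·S is incremental. -/
/-- The selection row `e_p - e_q` in `ℝ^n`. -/
def selRow {n : ℕ} (p q : Fin n) : Fin n → ℝ :=
  fun j => (if j = p then (1 : ℝ) else 0) - (if j = q then (1 : ℝ) else 0)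

/-- A matrix is incremental if each row is supported on some column that is zero in all
earlier rows (i.e., each row introduces a new item). -/
def Incremental {m n : ℕ} (S : Matrix (Fin m) (Fin n) ℝ) : Prop :=
  ∀ k, ∃ c, S k c ≠ 0 ∧ ∀ j, j < k → S j c = 0

/-!
Repeatedly remove, from the rows that remain, one that has a column private to it among them
(a selection row is nonzero on both of its columns). Listed in reverse order of removal, each
row then has a column on which all earlier rows vanish.
-/

lemma selRow_apply_left {n : ℕ} {p q : Fin n} (h : p ≠ q) : selRow p q p = 1 := by
  simp [selRow, h]

lemma selRow_apply_right {n : ℕ} {p q : Fin n} (h : p ≠ q) : selRow p q q = -1 := by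
  simp [selRow, h.symm]

theorem exists_incremental_enumeration {ι κ α : Type*} [DecidableEq ι] [Zero α]
    (S : ι → κ → α)
    (hprivate : ∀ I : Finset ι, I.Nonempty →
      ∃ i ∈ I, ∃ c, S i c ≠ 0 ∧ ∀ j ∈ I, j ≠ i → S j c = 0) :
    ∀ (n : ℕ) (I : Finset ι), I.card = n →
      ∃ e : Fin n → ι, Function.Injective e ∧ (∀ k, e k ∈ I) ∧
        ∀ k, ∃ c, S (e k) c ≠ 0 ∧ ∀ j < k, S (e j) c = 0 := by
  intro n
  induction n with
  | zero => exact fun _ _ => ⟨Fin.elim0, fun k => k.elim0, fun k => k.elim0, fun k => k.elim0⟩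
  | succ n ih =>
    intro I hI
    obtain ⟨i, hiI, c, hic, hc⟩ := hprivate I (Finset.card_pos.mp (by omega))
    obtain ⟨e, he_inj, heI, he_new⟩ :=
      ih (I.erase i) (by rw [Finset.card_erase_of_mem hiI, hI, Nat.add_sub_cancel])
    refine ⟨Fin.snoc e i, Fin.snoc_injective_of_injective he_inj ?_, ?_, ?_⟩
    · rintro ⟨k, rfl⟩
      exact Finset.notMem_erase _ _ (heI k)
    · intro k
      induction k using Fin.lastCases with
      | last => simpa using hiI
      | cast k => simpa using Finset.mem_of_mem_erase (heI k)
    · intro k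
      induction k using Fin.lastCases with
      | last =>
        refine ⟨c, by simpa using hic, fun j hj => ?_⟩
        obtain ⟨j, rfl⟩ := Fin.exists_castSucc_eq.mpr (Fin.ne_last_of_lt hj)
        simpa using hc _ (Finset.mem_of_mem_erase (heI j)) (Finset.ne_of_mem_erase (heI j))
      | cast k =>
        obtain ⟨c, hkc, hjc⟩ := he_new k
        refine ⟨c, by simpa using hkc, fun j hj => ?_⟩
        obtain ⟨j, rfl⟩ :=
          Fin.exists_castSucc_eq.mpr (Fin.ne_last_of_lt (hj.trans (Fin.castSucc_lt_last k)))
        simpa using hjc j (Fin.castSucc_lt_castSucc_iff.mp hj)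

theorem selection_subset_new_implies_incremental_general {m n : ℕ}
    (S : Matrix (Fin m) (Fin n) ℝ) (p q : Fin m → Fin n)
    (hpq : ∀ i, p i ≠ q i) (hS : ∀ i, S i = selRow (p i) (q i))
    (hsub : ∀ I : Finset (Fin m), I.Nonempty →
      ∃ i ∈ I, (∀ j ∈ I, j ≠ i → S j (p i) = 0) ∨ (∀ j ∈ I, j ≠ i → S j (q i) = 0)) :
    ∃ (P : Matrix (Fin m) (Fin m) ℝ) (σ : Equiv.Perm (Fin m)),
      P = σ.permMatrix ℝ ∧ Incremental (P * S) := by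
  have hprivate : ∀ I : Finset (Fin m), I.Nonempty →
      ∃ i ∈ I, ∃ c, S i c ≠ 0 ∧ ∀ j ∈ I, j ≠ i → S j c = 0 := by
    intro I hI
    obtain ⟨i, hiI, hp | hq⟩ := hsub I hI
    · exact ⟨i, hiI, p i, by simp [hS, selRow_apply_left (hpq i)], hp⟩
    · exact ⟨i, hiI, q i, by simp [hS, selRow_apply_right (hpq i)], hq⟩
  obtain ⟨e, he_inj, -, he_new⟩ :=
    exists_incremental_enumeration S hprivate m Finset.univ (by simp)
  let σ : Equiv.Perm (Fin m) := Equiv.ofBijective e he_inj.bijective_of_finite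
  refine ⟨σ.permMatrix ℝ, σ, rfl, ?_⟩
  rw [Equiv.Perm.permMatrix, PEquiv.toMatrix_toPEquiv_mul]
  exact he_new

/-- If every nonempty subset of rows of a selection matrix contains a row with a support
column unused by the other rows in the subset, then some row permutation of `S` is
incremental. -/
theorem selection_subset_new_implies_incremental {m n : ℕ} (hn : m + 1 ≤ n)
    (S : Matrix (Fin m) (Fin n) ℝ) (p q : Fin m → Fin n)
    (hpq : ∀ i, p i ≠ q i) (hS : ∀ i, S i = selRow (p i) (q i))
    (hsub : ∀ I : Finset (Fin m), I.Nonempty →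
      ∃ i ∈ I, (∀ j ∈ I, j ≠ i → S j (p i) = 0) ∨ (∀ j ∈ I, j ≠ i → S j (q i) = 0)) :
    ∃ (P : Matrix (Fin m) (Fin m) ℝ) (σ : Equiv.Perm (Fin m)),
      P = σ.permMatrix ℝ ∧ Incremental (P * S) :=
  selection_subset_new_implies_incremental_general S p q hpq hS hsub
end

section
/- Let S be an m × n selection matrix with n ≥ m+1, and suppose there exists an m × m permutation matrix P such that P·S is incremental. Then S has full row rank, i.e., rank(S) = m. -/
lemma incremental_linearIndependent {m n : ℕ} (T : Matrix (Fin m) (Fin n) ℝ)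
    (h : Incremental T) : LinearIndependent ℝ T := by
  refine Fintype.linearIndependent_iff.mpr ?_
  intro g hg
  by_contra hne
  push_neg at hne
  obtain ⟨i0, hi0⟩ := hne
  classical
  set F := Finset.univ.filter (fun i => g i ≠ 0) with hF
  have hFne : F.Nonempty := ⟨i0, by simp [hF, hi0]⟩
  set k := F.max' hFne with hk
  have hk_mem : k ∈ F := F.max'_mem hFne
  have hgk : g k ≠ 0 := by simpa [hF] using hk_mem
  have hgt : ∀ i, k < i → g i = 0 := by
    intro i hi
    by_contra hgi
    exact absurd (F.le_max' i (by simp [hF, hgi])) (not_le.mpr hi)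
  obtain ⟨c, hc1, hc2⟩ := h k
  have := congrFun hg c
  simp only [Finset.sum_apply, Pi.smul_apply, smul_eq_mul, Pi.zero_apply] at this
  have hsingle : ∑ i, g i * T i c = g k * T k c := by
    apply Finset.sum_eq_single
    · intro i _ hik
      rcases lt_or_gt_of_ne hik with h1 | h1
      · rw [hc2 i h1, mul_zero]
      · rw [hgt i h1, zero_mul]
    · intro h; exact absurd (Finset.mem_univ k) h
  rw [hsingle] at this
  exact hc1 (by simpa [hgk] using mul_eq_zero.mp this)

/-- If some row permutation of a selection matrix `S` (with `n ≥ m+1`) is incremental,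
then `S` has full row rank `m`. -/
theorem selection_incremental_implies_fullrank {m n : ℕ} (hn : m + 1 ≤ n)
    (S : Matrix (Fin m) (Fin n) ℝ) (p q : Fin m → Fin n)
    (hpq : ∀ i, p i ≠ q i) (hS : ∀ i, S i = selRow (p i) (q i))
    (hinc : ∃ σ : Equiv.Perm (Fin m), Incremental (σ.permMatrix ℝ * S)) :
    S.rank = m := by
  obtain ⟨σ, hσ⟩ := hinc
  have hTrow : ∀ i, (σ.permMatrix ℝ * S) i = S (σ i) := by
    intro i; funext j
    simp [Matrix.mul_apply, Equiv.Perm.permMatrix, PEquiv.toMatrix, Equiv.toPEquiv,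
      Finset.sum_ite_eq, eq_comm]
  have hind : LinearIndependent ℝ (σ.permMatrix ℝ * S) :=
    incremental_linearIndependent _ hσ
  have hind' : LinearIndependent ℝ (fun i => S (σ i)) := by
    have : (σ.permMatrix ℝ * S) = fun i => S (σ i) := funext hTrow
    rwa [this] at hind
  have hindS : LinearIndependent ℝ S := (linearIndependent_equiv σ).mp hind'
  simpa using hindS.rank_matrix
end

section
/- Let {s_i}_{i=1}^r be linearly independent vectors in ℝ^n, each of the form e_p - e_q for distinct p, q ∈ [n], with n ≥ r+1. Define a graph G on vertex set [r] where i and j are adjacent if the supports of s_i and s_j intersect. For distinct p, q ∈ [n], if e_p - e_q lies in the span of {s_i}_{i=1}^r, then there exist vertices i_p and i_q in the same connected component of G such that s_{i_p}[p] ≠ 0 and s_{i_q}[q] ≠ 0. -/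
/-- The support-overlap graph on the index set of a family of vectors: `i` and `j` are
adjacent iff `i ≠ j` and the supports of `s i` and `s j` intersect. -/
def overlapGraph {r n : ℕ} (s : Fin r → Fin n → ℝ) : SimpleGraph (Fin r) :=
  SimpleGraph.fromRel (fun i j => ∃ k, s i k ≠ 0 ∧ s j k ≠ 0)

/-!
Write `e_p - e_q = ∑ i, c i • s i` and let `T` be the set of coordinates touched by the
connected component of a row `s_{i_p}` with `s_{i_p}[p] ≠ 0`. Rows outside the component vanish
on `T` and rows inside it vanish off `T`, so summing the combination over `T` only sees the rows
of the component, each of which has coordinate sum zero. Hence `e_p - e_q` sums to zero over `T`;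
as `p ∈ T`, this forces `q ∈ T`.
-/

open Finset

lemma overlapGraph_reachable_of_ne_zero {r n : ℕ} {s : Fin r → Fin n → ℝ} {i j : Fin r}
    {k : Fin n} (hi : s i k ≠ 0) (hj : s j k ≠ 0) : (overlapGraph s).Reachable i j := by
  by_cases h : i = j
  · exact h ▸ SimpleGraph.Reachable.refl i
  · exact SimpleGraph.Adj.reachable <| (SimpleGraph.fromRel_adj _ _ _).mpr ⟨h, .inl ⟨k, hi, hj⟩⟩

lemma sum_selRow {n : ℕ} (p q : Fin n) : ∑ k, selRow p q k = 0 := by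
  simp [selRow, sum_sub_distrib]

open Classical in
noncomputable def componentSupport {r n : ℕ} (s : Fin r → Fin n → ℝ) (i₀ : Fin r) :
    Finset (Fin n) :=
  {k | ∃ i, (overlapGraph s).Reachable i₀ i ∧ s i k ≠ 0}

lemma mem_componentSupport {r n : ℕ} {s : Fin r → Fin n → ℝ} {i₀ : Fin r} {k : Fin n} :
    k ∈ componentSupport s i₀ ↔ ∃ i, (overlapGraph s).Reachable i₀ i ∧ s i k ≠ 0 := by
  simp [componentSupport]

theorem sum_combination_over_componentSupport_eq_zero {r n : ℕ} {s : Fin r → Fin n → ℝ}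
    (hs : ∀ i, ∑ k, s i k = 0) (c : Fin r → ℝ) (i₀ : Fin r) :
    ∑ k ∈ componentSupport s i₀, ∑ i, c i * s i k = 0 := by
  classical
  set C : Finset (Fin r) := {i | (overlapGraph s).Reachable i₀ i}
  set T := componentSupport s i₀
  have outside_vanishes : ∀ k ∈ T, ∀ i ∉ C, s i k = 0 := by
    intro k hk i hi
    obtain ⟨j, hj, hjk⟩ := mem_componentSupport.mp hk
    by_contra hik
    exact hi (mem_filter.mpr ⟨mem_univ i, hj.trans (overlapGraph_reachable_of_ne_zero hjk hik)⟩)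
  have inside_vanishes : ∀ i ∈ C, ∀ k ∉ T, s i k = 0 := by
    intro i hi k hk
    by_contra hik
    exact hk (mem_componentSupport.mpr ⟨i, (mem_filter.mp hi).2, hik⟩)
  calc ∑ k ∈ T, ∑ i, c i * s i k
      = ∑ k ∈ T, ∑ i ∈ C, c i * s i k := by
        refine sum_congr rfl fun k hk => (sum_subset C.subset_univ fun i _ hi => ?_).symm
        rw [outside_vanishes k hk i hi, mul_zero]
    _ = ∑ i ∈ C, c i * ∑ k ∈ T, s i k := by
        rw [sum_comm]; simp only [mul_sum]
    _ = ∑ i ∈ C, c i * ∑ k, s i k := by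
        refine sum_congr rfl fun i hi => congrArg _ (sum_subset T.subset_univ fun k _ hk => ?_)
        exact inside_vanishes i hi k hk
    _ = 0 := by simp [hs]

theorem span_implies_linked_general {r n : ℕ}
    (s : Fin r → Fin n → ℝ) (ps qs : Fin r → Fin n)
    (hs : ∀ i, s i = selRow (ps i) (qs i))
    (p q : Fin n) (hpqd : p ≠ q)
    (hspan : selRow p q ∈ Submodule.span ℝ (Set.range s)) :
    ∃ ip iq : Fin r, (overlapGraph s).Reachable ip iq ∧ s ip p ≠ 0 ∧ s iq q ≠ 0 := by
  obtain ⟨c, hc⟩ := (Submodule.mem_span_range_iff_exists_fun ℝ).mp hspan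
  have hval : ∀ k, ∑ i, c i * s i k = selRow p q k := fun k => by
    simpa [Finset.sum_apply] using congrFun hc k
  obtain ⟨ip, -, hip⟩ : ∃ i ∈ univ, c i * s i p ≠ 0 :=
    exists_ne_zero_of_sum_ne_zero (by simp [hval, selRow, hpqd])
  have hzero := sum_combination_over_componentSupport_eq_zero
    (fun i => hs i ▸ sum_selRow (ps i) (qs i)) c ip
  simp only [hval] at hzero
  by_contra hunlinked
  have hq : q ∉ componentSupport s ip := fun hq =>
    let ⟨iq, hreach, hiq⟩ := mem_componentSupport.mp hq
    hunlinked ⟨ip, iq, hreach, right_ne_zero_of_mul hip, hiq⟩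
  have hp : p ∈ componentSupport s ip :=
    mem_componentSupport.mpr ⟨ip, .rfl, right_ne_zero_of_mul hip⟩
  simp [selRow, sum_sub_distrib, hp, hq] at hzero

/-- If `e_p - e_q` lies in the span of linearly independent selection rows
`{s_i}_{i=1}^r` (`n ≥ r+1`), then there are vertices `i_p`, `i_q` in the same connected
component of the support-overlap graph with `s_{i_p}[p] ≠ 0` and `s_{i_q}[q] ≠ 0`. -/
theorem span_implies_linked {r n : ℕ} (hn : r + 1 ≤ n)
    (s : Fin r → Fin n → ℝ) (ps qs : Fin r → Fin n)
    (hpq : ∀ i, ps i ≠ qs i) (hs : ∀ i, s i = selRow (ps i) (qs i))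
    (hli : LinearIndependent ℝ s)
    (p q : Fin n) (hpqd : p ≠ q)
    (hspan : selRow p q ∈ Submodule.span ℝ (Set.range s)) :
    ∃ ip iq : Fin r, (overlapGraph s).Reachable ip iq ∧ s ip p ≠ 0 ∧ s iq q ≠ 0 :=
  span_implies_linked_general s ps qs hs p q hpqd hspan
end

section
/- Let S be an m × n selection matrix of rank r ≤ min(m, n-1). Let s = e_p - e_q where (p,q) is sampled uniformly at random among ordered pairs of distinct elements of [n], independently of S. Then 2r/(n(n-1)) ≤ P(s ∈ rowspace(S)) ≤ (r+1)r/(n(n-1)). -/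
lemma selRow_self {n : ℕ} (a : Fin n) : selRow a a = 0 := by
  funext j; simp [selRow]

lemma selRow_symm {n : ℕ} (a b : Fin n) : selRow b a = -selRow a b := by
  funext j; simp [selRow]

lemma selRow_trans {n : ℕ} (a b c : Fin n) : selRow a b + selRow b c = selRow a c := by
  funext j; simp [selRow]

lemma selRow_eq_single {n : ℕ} (a b : Fin n) :
    selRow a b = Pi.single a (1:ℝ) - Pi.single b 1 := by
  funext j; simp [selRow, Pi.single_apply]

lemma nat_sq_sub (x : ℕ) (h : 1 ≤ x) : x * x - x = x * (x - 1) := by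
  obtain ⟨y, rfl⟩ : ∃ y, x = y + 1 := ⟨x - 1, by omega⟩
  simp only [Nat.add_sub_cancel]
  have h1 : (y+1) * (y+1) = (y+1) * y + (y+1) := by ring
  omega

lemma nat_two_mul_le (x : ℕ) : 2 * (x - 1) ≤ x * (x - 1) := by
  rcases Nat.lt_or_ge x 2 with h | h
  · interval_cases x <;> simp
  · exact Nat.mul_le_mul_right _ h

lemma nat_decomp (x : ℕ) (h : 1 ≤ x) : x * (x-1) = (x-1)*(x-1) + (x-1) := by
  obtain ⟨y, rfl⟩ : ∃ y, x = y + 1 := ⟨x - 1, by omega⟩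
  simp
  ring

/-- For a rank-`r` selection matrix `S` (`r ≤ min(m, n-1)`), the probability that a
uniformly random selection row `e_p - e_q` (ordered pair of distinct indices, drawn
independently of `S`) lies in the row space of `S` is between `2r/(n(n-1))` and
`(r+1)r/(n(n-1))`. -/
theorem random_row_in_rowspace_prob {m n r : ℕ}
    (S : Matrix (Fin m) (Fin n) ℝ) (p q : Fin m → Fin n)
    (hpq : ∀ i, p i ≠ q i) (hS : ∀ i, S i = selRow (p i) (q i))
    (hr : r ≤ min m (n - 1)) (hrank : S.rank = r) :
    (2 * r : ℝ) / (n * (n - 1)) ≤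
      ({pq : Fin n × Fin n | pq.1 ≠ pq.2 ∧
          selRow pq.1 pq.2 ∈ Submodule.span ℝ (Set.range fun i => S i)}.ncard : ℝ)
        / (n * (n - 1)) ∧
    ({pq : Fin n × Fin n | pq.1 ≠ pq.2 ∧
          selRow pq.1 pq.2 ∈ Submodule.span ℝ (Set.range fun i => S i)}.ncard : ℝ)
        / (n * (n - 1)) ≤ ((r + 1) * r : ℝ) / (n * (n - 1)) := by
  classical
  set V : Submodule ℝ (Fin n → ℝ) := Submodule.span ℝ (Set.range fun i => S i) with hVdef
  -- the equivalence relation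
  set st : Setoid (Fin n) :=
    ⟨fun a b => selRow a b ∈ V,
      ⟨fun a => by rw [selRow_self]; exact zero_mem V,
       fun {a b} h => by rw [selRow_symm]; exact neg_mem h,
       fun {a b c} h1 h2 => by rw [← selRow_trans a b c]; exact add_mem h1 h2⟩⟩ with hst
  haveI : DecidableEq (Quotient st) := Classical.decEq _
  haveI : Fintype (Quotient st) := Quotient.fintype st
  set t := Fintype.card (Quotient st) with ht
  -- membership characterization
  have hmemiff : ∀ a b : Fin n, selRow a b ∈ V ↔ Quotient.mk st a = Quotient.mk st b := by
    intro a b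
    exact ⟨fun h => Quotient.sound h, fun h => Quotient.exact h⟩
  -- rank = finrank V
  have hrV : Module.finrank ℝ V = r := by
    rw [← hrank, Matrix.rank_eq_finrank_span_row]; rfl
  -- key dimension identity : r + t = n
  have hkey : r + t = n := by
    -- the counting linear map
    let φ : (Fin n → ℝ) →ₗ[ℝ] (Quotient st → ℝ) :=
      { toFun := fun x c => ∑ j, if Quotient.mk st j = c then x j else 0
        map_add' := by
          intro x y; funext c
          simp only [Pi.add_apply]
          rw [← Finset.sum_add_distrib]
          apply Finset.sum_congr rfl
          intro j _; split <;> simp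
        map_smul' := by
          intro a x; funext c
          simp only [Pi.smul_apply, smul_eq_mul, RingHom.id_apply]
          rw [Finset.mul_sum]
          apply Finset.sum_congr rfl
          intro j _; split <;> simp }
    have hφsingle : ∀ (a : Fin n) (c), φ (Pi.single a 1) c
        = if Quotient.mk st a = c then 1 else 0 := by
      intro a c
      show (∑ j, if Quotient.mk st j = c then Pi.single a (1:ℝ) j else 0) = _
      rw [show (∑ j, if Quotient.mk st j = c then Pi.single a (1:ℝ) j else 0)
            = ∑ j, if j = a then (if Quotient.mk st a = c then (1:ℝ) else 0) else 0 from ?_]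
      · rw [Finset.sum_ite_eq']; simp
      · apply Finset.sum_congr rfl
        intro j _
        rcases eq_or_ne j a with rfl | hja
        · simp
        · simp [Pi.single_apply, hja]
    have hVker : V ≤ LinearMap.ker φ := by
      rw [hVdef, Submodule.span_le]
      rintro _ ⟨i, rfl⟩
      have hmem : selRow (p i) (q i) ∈ V := by
        rw [hVdef]
        have : S i ∈ Set.range fun i => S i := ⟨i, rfl⟩
        have h2 := Submodule.subset_span (R := ℝ) this
        rwa [hS i] at h2
      have heq : Quotient.mk st (p i) = Quotient.mk st (q i) := (hmemiff _ _).mp hmem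
      simp only [SetLike.mem_coe, LinearMap.mem_ker]
      rw [hS i, selRow_eq_single, map_sub]
      funext c
      simp [hφsingle, heq]
    have hφsurj : Function.Surjective φ := by
      intro y
      refine ⟨fun j => if j = (Quotient.mk st j).out then y (Quotient.mk st j) else 0, ?_⟩
      funext c
      show (∑ j, if Quotient.mk st j = c then _ else 0) = y c
      rw [show (∑ j : Fin n, if Quotient.mk st j = c then
            (if j = (Quotient.mk st j).out then y (Quotient.mk st j) else 0) else 0)
          = ∑ j : Fin n, if j = c.out then y c else 0 from ?_]
      · rw [Finset.sum_ite_eq']; simp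
      · apply Finset.sum_congr rfl
        intro j _
        rcases eq_or_ne j c.out with rfl | hj
        · simp [Quotient.out_eq]
        · by_cases h1 : Quotient.mk st j = c
          · have h2 : j ≠ (Quotient.mk st j).out := by
              intro hcon
              apply hj
              rw [hcon, h1]
            simp [h1, h2, hj]
          · simp [h1, hj]
    have hup : r + t ≤ n := by
      have h1 := LinearMap.finrank_range_add_finrank_ker φ
      rw [LinearMap.range_eq_top.mpr hφsurj] at h1
      rw [finrank_top, Module.finrank_pi] at h1
      have h3 : Module.finrank ℝ (Fin n → ℝ) = n := by simp
      rw [h3] at h1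
      have h4 : Module.finrank ℝ V ≤ Module.finrank ℝ (LinearMap.ker φ) :=
        Submodule.finrank_mono hVker
      omega
    -- lower bound on the rank : exhibit independent vectors
    have hlo : n ≤ r + t := by
      have h1 : Fintype.card {j : Fin n // j = (Quotient.mk st j).out} = t := by
        rw [ht]
        refine Fintype.card_of_bijective
          (f := fun j : {j : Fin n // j = (Quotient.mk st j).out} => Quotient.mk st j.1)
          ⟨?_, ?_⟩
        · rintro ⟨a, ha⟩ ⟨b, hb⟩ h
          simp only at h
          apply Subtype.ext
          show a = b
          rw [ha, hb, h]
        · intro c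
          exact ⟨⟨c.out, by rw [Quotient.out_eq]⟩, Quotient.out_eq c⟩
      have hcardB : Fintype.card {j : Fin n // j ≠ (Quotient.mk st j).out} + t = n := by
        have h2 := Fintype.card_subtype_compl (fun j : Fin n => j = (Quotient.mk st j).out)
        have h3 : Fintype.card {j : Fin n // j = (Quotient.mk st j).out}
            ≤ Fintype.card (Fin n) := Fintype.card_subtype_le _
        rw [h1] at h2 h3
        rw [h2]
        simp only [Fintype.card_fin] at *
        omega
      have hli : LinearIndependent ℝ
          (fun j : {j : Fin n // j ≠ (Quotient.mk st j).out} =>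
            selRow j.1 (Quotient.mk st j.1).out) := by
        rw [Fintype.linearIndependent_iff]
        intro gg hsum i
        have hpt := congrFun hsum i.1
        simp only [Finset.sum_apply, Pi.smul_apply, smul_eq_mul, Pi.zero_apply] at hpt
        have h0 : ∀ j : {j : Fin n // j ≠ (Quotient.mk st j).out},
            gg j * (selRow j.1 (Quotient.mk st j.1).out) i.1
            = if j = i then gg j else 0 := by
          intro j
          have hsec : i.1 ≠ (Quotient.mk st j.1).out := by
            intro hcon
            apply i.2
            have h5 : Quotient.mk st i.1 = Quotient.mk st j.1 := by
              rw [hcon, Quotient.out_eq]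
            rw [h5, ← hcon]
          rcases eq_or_ne j i with rfl | hji
          · simp [selRow, hsec]
          · have h6 : i.1 ≠ j.1 := fun h => hji (Subtype.ext h).symm
            simp [selRow, hsec, h6, hji]
        rw [Finset.sum_congr rfl (fun j _ => h0 j), Finset.sum_ite_eq'] at hpt
        simpa using hpt
      have hspan : Submodule.span ℝ
          (Set.range fun j : {j : Fin n // j ≠ (Quotient.mk st j).out} =>
            selRow j.1 (Quotient.mk st j.1).out) ≤ V := by
        rw [Submodule.span_le]
        rintro _ ⟨j, rfl⟩
        simp only [SetLike.mem_coe]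
        apply (hmemiff _ _).mpr
        rw [Quotient.out_eq]
      have h7 := finrank_span_eq_card hli
      have h8 := Submodule.finrank_mono (t := V) hspan
      omega
    omega
  -- the fiber cardinalities
  set g : Quotient st → ℕ :=
    fun c => (Finset.univ.filter fun j => Quotient.mk st j = c).card with hg
  have hg1 : ∀ c, 1 ≤ g c := by
    intro c
    apply Finset.card_pos.mpr
    exact ⟨c.out, by simp [Quotient.out_eq]⟩
  have hgsum : ∑ c, g c = n := by
    have := Finset.card_eq_sum_card_fiberwise
      (f := fun j : Fin n => Quotient.mk st j) (s := Finset.univ) (t := Finset.univ)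
      (fun x _ => Finset.mem_univ _)
    simpa using this.symm
  -- sum of (g c - 1) equals r
  have hsum1 : ∑ c, (g c - 1) = r := by
    have h2 : ∑ c, (g c - 1) + t = n := by
      have e1 : ∑ c, ((g c - 1) + 1) = ∑ c, g c :=
        Finset.sum_congr rfl fun c _ => by have := hg1 c; omega
      rw [Finset.sum_add_distrib] at e1
      simp only [Finset.sum_const, Finset.card_univ, smul_eq_mul, mul_one] at e1
      omega
    omega
  -- the pair set as a finset
  set F0 : Finset (Fin n × Fin n) :=
    Finset.univ.filter fun pq => pq.1 ≠ pq.2 ∧ Quotient.mk st pq.1 = Quotient.mk st pq.2 with hF0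
  have hsetF0 : {pq : Fin n × Fin n | pq.1 ≠ pq.2 ∧
      selRow pq.1 pq.2 ∈ Submodule.span ℝ (Set.range fun i => S i)} = ↑F0 := by
    ext pq
    simp only [hF0, Finset.coe_filter, Set.mem_setOf_eq, Finset.mem_univ, true_and]
    rw [hmemiff]
  have hcard : F0.card = ∑ c, g c * (g c - 1) := by
    rw [Finset.card_eq_sum_card_fiberwise
      (f := fun pq : Fin n × Fin n => Quotient.mk st pq.1) (t := Finset.univ)
      (fun x _ => Finset.mem_univ _)]
    apply Finset.sum_congr rfl
    intro c _
    have hfib : F0.filter (fun pq => Quotient.mk st pq.1 = c)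
        = (Finset.univ.filter fun j => Quotient.mk st j = c).offDiag := by
      ext pq
      simp only [hF0, Finset.mem_filter, Finset.mem_univ, true_and, Finset.mem_offDiag]
      constructor
      · rintro ⟨⟨hne, heq⟩, h1⟩
        exact ⟨h1, heq ▸ h1, hne⟩
      · rintro ⟨h1, h2, hne⟩
        exact ⟨⟨hne, h1.trans h2.symm⟩, h1⟩
    rw [hfib, Finset.offDiag_card]
    exact nat_sq_sub _ (hg1 c)
  -- integer bounds
  have hlow : 2 * r ≤ F0.card := by
    rw [hcard]
    calc 2 * r = ∑ c, 2 * (g c - 1) := by rw [← Finset.mul_sum, hsum1]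
      _ ≤ ∑ c, g c * (g c - 1) := Finset.sum_le_sum fun c _ => nat_two_mul_le (g c)
  have hhigh : F0.card ≤ (r + 1) * r := by
    rw [hcard]
    calc ∑ c, g c * (g c - 1) = ∑ c, ((g c - 1) * (g c - 1) + (g c - 1)) :=
          Finset.sum_congr rfl fun c _ => nat_decomp _ (hg1 c)
      _ = ∑ c, (g c - 1) * (g c - 1) + ∑ c, (g c - 1) := by rw [Finset.sum_add_distrib]
      _ ≤ ∑ c, (g c - 1) * r + r := by
          gcongr with c hc
          · rw [← hsum1]
            exact Finset.single_le_sum (f := fun c => g c - 1)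
              (fun c _ => Nat.zero_le _) (Finset.mem_univ c)
          · exact hsum1.le
      _ = r * r + r := by rw [← Finset.sum_mul, hsum1]
      _ = (r + 1) * r := by ring
  -- now the real-number statement
  rw [hsetF0, Set.ncard_coe_finset]
  rcases le_or_gt 2 n with hn | hn
  · have hD : (0:ℝ) ≤ (n : ℝ) * ((n:ℝ) - 1) := by
      have h2 : (2:ℝ) ≤ (n:ℝ) := by exact_mod_cast hn
      nlinarith
    constructor
    · exact div_le_div_of_nonneg_right (by exact_mod_cast hlow) hD
    · exact div_le_div_of_nonneg_right (by exact_mod_cast hhigh) hD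
  · -- n ≤ 1 : denominator is 0
    have hD : (n : ℝ) * ((n:ℝ) - 1) = 0 := by
      have h01 : n = 0 ∨ n = 1 := by omega
      rcases h01 with h | h <;> rw [h] <;> norm_num
    rw [hD]
    simp
end

section
/- Let {X_i}_{i=1}^r and {Y_i}_{i=1}^r be positive-integer-valued random variables, where the Y_i are mutually independent, and suppose that for all i ∈ [r], all u ∈ ℝ, and all possible histories u_{1:i-1}, we have P(X_i ≤ u | X_1 = u_1, ..., X_{i-1} = u_{i-1}) ≥ P(Y_i ≤ u). Then with X = ∑_i X_i and Y = ∑_i Y_i, we have P(X ≤ u) ≥ P(Y ≤ u) for all u ∈ ℝ, and E[X] ≤ E[Y]. -/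
open MeasureTheory ProbabilityTheory
open scoped ENNReal

section Helpers

variable {Ω : Type*} [MeasurableSpace Ω]

lemma sd_partition_tsum (μ : Measure Ω) {α : Type*} [MeasurableSpace α]
    [Countable α] [MeasurableSingletonClass α] {f : Ω → α} (hf : Measurable f)
    {E : Set Ω} (hE : MeasurableSet E) : μ E = ∑' a, μ (f ⁻¹' {a} ∩ E) := by
  have hd : Pairwise (Function.onFun Disjoint fun a => f ⁻¹' {a} ∩ E) := by
    intro a b hab
    refine Set.disjoint_left.2 ?_
    rintro ω ⟨h1, -⟩ ⟨h2, -⟩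
    exact hab ((Set.mem_singleton_iff.1 h1).symm.trans (Set.mem_singleton_iff.1 h2))
  rw [← measure_iUnion hd fun a => (hf (measurableSet_singleton a)).inter hE]
  congr 1
  ext ω
  simp

lemma sd_lint_comp (μ : Measure Ω) {α : Type*} [MeasurableSpace α]
    [Countable α] [MeasurableSingletonClass α] {f : Ω → α} (hf : Measurable f)
    (g : α → ℝ≥0∞) : ∫⁻ ω, g (f ω) ∂μ = ∑' a, g a * μ (f ⁻¹' {a}) := by
  rw [← lintegral_map (measurable_of_countable g) hf, lintegral_countable']
  refine tsum_congr fun a => ?_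
  rw [Measure.map_apply hf (measurableSet_singleton a)]

lemma sd_tele (g : ℕ → ℝ≥0∞) (hmono : Antitone g) :
    ∀ N s, s ≤ N → ∑ n ∈ Finset.Ico s N, (g n - g (n+1)) = g s - g N := by
  intro N
  induction N with
  | zero => intro s hs; interval_cases s; simp
  | succ N ih =>
    intro s hs
    rcases eq_or_lt_of_le hs with h | h
    · rw [h]; simp
    · have hsN : s ≤ N := Nat.lt_succ_iff.1 h
      rw [Finset.sum_Ico_succ_top hsN, ih s hsN,
        tsub_add_tsub_cancel (hmono hsN) (hmono (Nat.le_succ N))]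

lemma sd_abel (g p q : ℕ → ℝ≥0∞) (N : ℕ)
    (hg0 : ∀ s, N ≤ s → g s = 0) (hmono : Antitone g)
    (hcdf : ∀ k, ∑ s ∈ Finset.range (k+1), q s ≤ ∑ s ∈ Finset.range (k+1), p s) :
    ∑' s, g s * q s ≤ ∑' s, g s * p s := by
  have key : ∀ w : ℕ → ℝ≥0∞, ∑' s, g s * w s
      = ∑ n ∈ Finset.range N, (g n - g (n+1)) * ∑ s ∈ Finset.range (n+1), w s := by
    intro w
    rw [tsum_eq_sum (s := Finset.range N)
      (fun b hb => by rw [hg0 b (by simpa using hb), zero_mul])]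
    have hgs : ∀ s ∈ Finset.Ico 0 N, g s * w s
        = ∑ n ∈ Finset.Ico s N, (g n - g (n+1)) * w s := by
      intro s hs
      rw [← Finset.sum_mul, sd_tele g hmono N s (Finset.mem_Ico.1 hs).2.le,
        hg0 N le_rfl, tsub_zero]
    simp only [Finset.range_eq_Ico]
    rw [Finset.sum_congr rfl hgs, Finset.sum_Ico_Ico_comm]
    exact Finset.sum_congr rfl fun n _ => (Finset.mul_sum _ _ _).symm
  rw [key q, key p]
  exact Finset.sum_le_sum fun n _ => mul_le_mul_right (hcdf n) _

lemma sd_cdf_sum (μ : Measure Ω) {f : Ω → ℕ} (hf : Measurable f) (k : ℕ) :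
    μ {ω | f ω ≤ k} = ∑ s ∈ Finset.range (k+1), μ (f ⁻¹' {s}) := by
  rw [← measure_biUnion_finset ?_ fun s _ => hf (measurableSet_singleton s)]
  · congr 1
    ext ω
    simp [Nat.lt_succ_iff]
  · intro a _ b _ hab
    refine Set.disjoint_left.2 ?_
    rintro ω h1 h2
    exact hab ((Set.mem_singleton_iff.1 h1).symm.trans (Set.mem_singleton_iff.1 h2))

lemma sd_key_nat (μ : Measure Ω) [IsProbabilityMeasure μ] (r : ℕ)
    (X Y : Fin r → Ω → ℕ)
    (hXm : ∀ i, Measurable (X i)) (hYm : ∀ i, Measurable (Y i))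
    (hY1 : ∀ i ω, 1 ≤ Y i ω)
    (hYind : iIndepFun Y μ)
    (hdom : ∀ (i : Fin r) (u : ℝ) (h : Fin i.val → ℕ),
      μ {ω | ∀ j : Fin i.val, X (j.castLE i.isLt.le) ω = h j} ≠ 0 →
      μ {ω | (Y i ω : ℝ) ≤ u} ≤
        ProbabilityTheory.cond μ {ω | ∀ j : Fin i.val, X (j.castLE i.isLt.le) ω = h j}
          {ω | (X i ω : ℝ) ≤ u}) :
    ∀ n, n ≤ r → ∀ m : ℕ,
      μ {ω | ∑ i ∈ Finset.univ.filter (fun i : Fin r => i.val < n), Y i ω ≤ m} ≤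
      μ {ω | ∑ i ∈ Finset.univ.filter (fun i : Fin r => i.val < n), X i ω ≤ m} := by
  intro n
  induction n with
  | zero =>
    intro _ m
    have he : Finset.univ.filter (fun i : Fin r => i.val < 0) = ∅ := by
      ext i; simp
    simp [he]
  | succ n ih =>
    intro hn m
    have hn' : n < r := hn
    have hle : n ≤ r := hn'.le
    set i₀ : Fin r := ⟨n, hn'⟩ with hi₀
    set t : Finset (Fin r) := Finset.univ.filter (fun i : Fin r => i.val < n) with ht
    have hi₀t : i₀ ∉ t := by simp [ht, hi₀]
    have hins : Finset.univ.filter (fun i : Fin r => i.val < n + 1) = insert i₀ t := by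
      ext i
      simp only [Finset.mem_filter, Finset.mem_univ, true_and, Finset.mem_insert, ht, hi₀]
      constructor
      · intro h
        rcases Nat.lt_succ_iff_lt_or_eq.1 h with h | h
        · exact Or.inr (by simp [h])
        · exact Or.inl (Fin.ext h)
      · rintro (rfl | h)
        · exact Nat.lt_succ_self n
        · exact Nat.lt_succ_of_lt (by simpa using h)
    have hsplit : ∀ (Z : Fin r → Ω → ℕ) (ω : Ω),
        ∑ i ∈ Finset.univ.filter (fun i : Fin r => i.val < n + 1), Z i ω
          = (∑ i ∈ t, Z i ω) + Z i₀ ω := by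
      intro Z ω
      rw [hins, Finset.sum_insert hi₀t, add_comm]
    set SX : Ω → ℕ := fun ω => ∑ i ∈ t, X i ω with hSX
    set SY : Ω → ℕ := fun ω => ∑ i ∈ t, Y i ω with hSY
    have hSXm : Measurable SX := Finset.measurable_sum _ fun i _ => hXm i
    have hSYm : Measurable SY := Finset.measurable_sum _ fun i _ => hYm i
    set g : ℕ → ℝ≥0∞ := fun s => μ {ω | Y i₀ ω + s ≤ m} with hg
    -- Y side
    have hYstep : μ {ω | SY ω + Y i₀ ω ≤ m} = ∑' s, μ (SY ⁻¹' {s}) * g s := by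
      have hme : MeasurableSet {ω | SY ω + Y i₀ ω ≤ m} :=
        (hSYm.add (hYm i₀)) ((Set.to_countable {k : ℕ | k ≤ m}).measurableSet)
      rw [sd_partition_tsum μ hSYm hme]
      refine tsum_congr fun s => ?_
      have hset : SY ⁻¹' {s} ∩ {ω | SY ω + Y i₀ ω ≤ m}
          = SY ⁻¹' {s} ∩ (Y i₀) ⁻¹' {z | z + s ≤ m} := by
        ext ω
        simp only [Set.mem_inter_iff, Set.mem_preimage, Set.mem_singleton_iff, Set.mem_setOf_eq]
        constructor
        · rintro ⟨h1, h2⟩; exact ⟨h1, by omega⟩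
        · rintro ⟨h1, h2⟩; exact ⟨h1, by omega⟩
      have hIF : IndepFun SY (Y i₀) μ := by
        have h := hYind.indepFun_finsetSum_of_notMem hYm hi₀t
        have he : (∑ j ∈ t, Y j) = SY := by
          funext ω; rw [Finset.sum_apply]
        rwa [he] at h
      rw [hset, hIF.measure_inter_preimage_eq_mul {s} {z | z + s ≤ m}
        (measurableSet_singleton s) ((Set.to_countable _).measurableSet)]
      rfl
    -- cdf comparison
    have hg0 : ∀ s, m ≤ s → g s = 0 := by
      intro s hs
      have hempty : {ω | Y i₀ ω + s ≤ m} = (∅ : Set Ω) := by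
        ext ω
        simp only [Set.mem_setOf_eq, Set.mem_empty_iff_false, iff_false, not_le]
        have := hY1 i₀ ω; omega
      simp only [hg, hempty, measure_empty]
    have hgmono : Antitone g := by
      refine antitone_nat_of_succ_le fun s => measure_mono fun ω h => ?_
      simp only [Set.mem_setOf_eq] at h ⊢
      omega
    have hcdf : ∀ k, ∑ s ∈ Finset.range (k+1), μ (SY ⁻¹' {s})
        ≤ ∑ s ∈ Finset.range (k+1), μ (SX ⁻¹' {s}) := by
      intro k
      rw [← sd_cdf_sum μ hSYm k, ← sd_cdf_sum μ hSXm k]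
      exact ih hle k
    -- X side
    set π : Ω → (Fin n → ℕ) := fun ω j => X (Fin.castLE hle j) ω with hπ
    have hπm : Measurable π := measurable_pi_lambda _ fun j => hXm _
    have htm : t = Finset.univ.map (Fin.castLEEmb hle) := by
      ext i
      simp only [ht, Finset.mem_filter, Finset.mem_univ, true_and]
      constructor
      · intro h
        refine Finset.mem_map.2 ⟨⟨i.val, h⟩, Finset.mem_univ _, ?_⟩
        ext
        simp [Fin.castLEEmb]
      · intro h
        obtain ⟨j, -, rfl⟩ := Finset.mem_map.1 h
        simpa [Fin.castLEEmb] using j.isLt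
    have hreidx : ∀ ω, SX ω = ∑ j : Fin n, X (Fin.castLE hle j) ω := by
      intro ω
      show ∑ i ∈ t, X i ω = _
      rw [htm, Finset.sum_map]
      exact Finset.sum_congr rfl fun j _ => rfl
    have hXstep : ∑' s, g s * μ (SX ⁻¹' {s}) ≤ μ {ω | SX ω + X i₀ ω ≤ m} := by
      have h1 : ∑' s, g s * μ (SX ⁻¹' {s}) = ∑' h : Fin n → ℕ, g (∑ j, h j) * μ (π ⁻¹' {h}) := by
        rw [← sd_lint_comp μ hSXm g, ← sd_lint_comp μ hπm (fun h => g (∑ j, h j))]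
        refine lintegral_congr fun ω => ?_
        rw [hreidx ω]
      rw [h1]
      have hmeasE : MeasurableSet {ω | SX ω + X i₀ ω ≤ m} :=
        (hSXm.add (hXm i₀)) ((Set.to_countable {k : ℕ | k ≤ m}).measurableSet)
      rw [sd_partition_tsum μ hπm hmeasE]
      refine ENNReal.tsum_le_tsum fun h => ?_
      set A : Set Ω := {ω | ∀ j : Fin n, X (Fin.castLE hle j) ω = h j} with hA
      have hπA : π ⁻¹' {h} = A := by
        ext ω
        simp only [Set.mem_preimage, Set.mem_singleton_iff, hA, Set.mem_setOf_eq, funext_iff]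
        exact Iff.rfl
      have hAm : MeasurableSet A := by
        have hAi : A = ⋂ j, (X (Fin.castLE hle j)) ⁻¹' {h j} := by
          ext ω; simp [hA]
        rw [hAi]
        exact MeasurableSet.iInter fun j => (hXm _) (measurableSet_singleton _)
      set u : ℝ := (m : ℝ) - ((∑ j, h j : ℕ) : ℝ) with hu
      have hEA : π ⁻¹' {h} ∩ {ω | SX ω + X i₀ ω ≤ m}
          = A ∩ {ω | (X i₀ ω : ℝ) ≤ u} := by
        rw [hπA]
        ext ω
        simp only [Set.mem_inter_iff, Set.mem_setOf_eq, hA]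
        constructor
        · rintro ⟨hω, h2⟩
          refine ⟨hω, ?_⟩
          have hEq : SX ω = ∑ j, h j := by
            rw [hreidx ω]; exact Finset.sum_congr rfl fun j _ => hω j
          rw [hEq] at h2
          have : ((∑ j, h j : ℕ) : ℝ) + (X i₀ ω : ℝ) ≤ (m : ℝ) := by exact_mod_cast h2
          rw [hu]; linarith
        · rintro ⟨hω, h2⟩
          refine ⟨hω, ?_⟩
          have hEq : SX ω = ∑ j, h j := by
            rw [hreidx ω]; exact Finset.sum_congr rfl fun j _ => hω j
          rw [hEq]
          rw [hu] at h2
          have : ((∑ j, h j : ℕ) : ℝ) + (X i₀ ω : ℝ) ≤ (m : ℝ) := by linarith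
          exact_mod_cast this
      rw [hEA, hπA]
      by_cases h0 : μ A = 0
      · rw [h0, mul_zero]
        exact zero_le
      · have hgY : g (∑ j, h j) = μ {ω | (Y i₀ ω : ℝ) ≤ u} := by
          show μ {ω | Y i₀ ω + (∑ j, h j) ≤ m} = _
          congr 1
          ext ω
          simp only [hg, Set.mem_setOf_eq, hu]
          constructor
          · intro hh
            have : ((Y i₀ ω : ℕ) : ℝ) + ((∑ j, h j : ℕ) : ℝ) ≤ (m : ℝ) := by exact_mod_cast hh
            linarith
          · intro hh
            have : ((Y i₀ ω : ℕ) : ℝ) + ((∑ j, h j : ℕ) : ℝ) ≤ (m : ℝ) := by linarith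
            exact_mod_cast this
        have hd := hdom i₀ u h h0
        rw [ProbabilityTheory.cond_apply hAm] at hd
        rw [hgY]
        calc μ {ω | (Y i₀ ω : ℝ) ≤ u} * μ A
            ≤ ((μ A)⁻¹ * μ (A ∩ {ω | (X i₀ ω : ℝ) ≤ u})) * μ A :=
              mul_le_mul_left hd _
          _ = μ (A ∩ {ω | (X i₀ ω : ℝ) ≤ u}) := by
              rw [mul_comm ((μ A)⁻¹) _, mul_assoc, ENNReal.inv_mul_cancel h0 (measure_ne_top μ A),
                mul_one]
    -- combine
    calc μ {ω | ∑ i ∈ Finset.univ.filter (fun i : Fin r => i.val < n + 1), Y i ω ≤ m}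
        = μ {ω | SY ω + Y i₀ ω ≤ m} := by
          congr 1; ext ω; rw [Set.mem_setOf_eq, Set.mem_setOf_eq, hsplit Y ω]
      _ = ∑' s, μ (SY ⁻¹' {s}) * g s := hYstep
      _ = ∑' s, g s * μ (SY ⁻¹' {s}) := tsum_congr fun s => mul_comm _ _
      _ ≤ ∑' s, g s * μ (SX ⁻¹' {s}) := sd_abel g _ _ m hg0 hgmono hcdf
      _ ≤ μ {ω | SX ω + X i₀ ω ≤ m} := hXstep
      _ = μ {ω | ∑ i ∈ Finset.univ.filter (fun i : Fin r => i.val < n + 1), X i ω ≤ m} := by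
          congr 1; ext ω; rw [Set.mem_setOf_eq, Set.mem_setOf_eq, hsplit X ω]

lemma sd_layer (μ : Measure Ω) {f : Ω → ℕ} (hf : Measurable f) :
    ∫⁻ ω, (f ω : ℝ≥0∞) ∂μ = ∑' k : ℕ, μ {ω | k < f ω} := by
  have hmeas : ∀ k : ℕ, MeasurableSet {ω | k < f ω} := fun k =>
    hf ((Set.to_countable {j : ℕ | k < j}).measurableSet)
  have hpt : ∀ ω, (f ω : ℝ≥0∞)
      = ∑' k : ℕ, Set.indicator {ω' | k < f ω'} (fun _ => (1 : ℝ≥0∞)) ω := by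
    intro ω
    have h0 : ∀ k ∉ Finset.range (f ω),
        Set.indicator {ω' | k < f ω'} (fun _ => (1 : ℝ≥0∞)) ω = 0 := by
      intro k hk
      simp only [Finset.mem_range, not_lt] at hk
      exact Set.indicator_of_notMem (by simpa using Nat.not_lt.2 hk) _
    symm
    rw [tsum_eq_sum h0,
      Finset.sum_congr rfl fun k hk =>
        Set.indicator_of_mem (by exact Finset.mem_range.1 hk) _]
    simp
  calc ∫⁻ ω, (f ω : ℝ≥0∞) ∂μ
      = ∫⁻ ω, ∑' k : ℕ, Set.indicator {ω' | k < f ω'} (fun _ => (1 : ℝ≥0∞)) ω ∂μ :=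
        lintegral_congr hpt
    _ = ∑' k : ℕ, ∫⁻ ω, Set.indicator {ω' | k < f ω'} (fun _ => (1 : ℝ≥0∞)) ω ∂μ :=
        lintegral_tsum fun k => (measurable_one.indicator (hmeas k)).aemeasurable
    _ = ∑' k : ℕ, μ {ω | k < f ω} := by
        refine tsum_congr fun k => ?_
        rw [lintegral_indicator (hmeas k)]
        simp

end Helpers

/-- Conditional stochastic dominance of `X_i` over independent `Y_i` (each positive
integer valued) implies dominance of the sums: `P(X ≤ u) ≥ P(Y ≤ u)` for all `u`,
and `E[X] ≤ E[Y]`. -/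
theorem sum_stochastic_dominance {Ω : Type*} [MeasurableSpace Ω]
    (μ : Measure Ω) [IsProbabilityMeasure μ] (r : ℕ)
    (X Y : Fin r → Ω → ℕ)
    (hXm : ∀ i, Measurable (X i)) (hYm : ∀ i, Measurable (Y i))
    (hX1 : ∀ i ω, 1 ≤ X i ω) (hY1 : ∀ i ω, 1 ≤ Y i ω)
    (hYind : iIndepFun Y μ)
    (hdom : ∀ (i : Fin r) (u : ℝ) (h : Fin i.val → ℕ),
      μ {ω | ∀ j : Fin i.val, X (j.castLE i.isLt.le) ω = h j} ≠ 0 →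
      μ {ω | (Y i ω : ℝ) ≤ u} ≤
        ProbabilityTheory.cond μ {ω | ∀ j : Fin i.val, X (j.castLE i.isLt.le) ω = h j}
          {ω | (X i ω : ℝ) ≤ u}) :
    (∀ u : ℝ, μ {ω | (∑ i, (Y i ω : ℝ)) ≤ u} ≤ μ {ω | (∑ i, (X i ω : ℝ)) ≤ u}) ∧
    ∫⁻ ω, (∑ i, (X i ω : ℝ≥0∞)) ∂μ ≤ ∫⁻ ω, (∑ i, (Y i ω : ℝ≥0∞)) ∂μ := by
  have part1nat : ∀ m : ℕ, μ {ω | ∑ i, Y i ω ≤ m} ≤ μ {ω | ∑ i, X i ω ≤ m} := by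
    intro m
    have h := sd_key_nat μ r X Y hXm hYm hY1 hYind hdom r le_rfl m
    have hfilter : Finset.univ.filter (fun i : Fin r => i.val < r) = Finset.univ := by
      ext i; simp [i.isLt]
    rwa [hfilter] at h
  have hXsum : Measurable fun ω => ∑ i, X i ω :=
    Finset.measurable_sum _ fun i _ => hXm i
  have hYsum : Measurable fun ω => ∑ i, Y i ω :=
    Finset.measurable_sum _ fun i _ => hYm i
  constructor
  · intro u
    rcases lt_or_ge u 0 with hu | hu
    · have hempty : {ω | (∑ i, (Y i ω : ℝ)) ≤ u} = (∅ : Set Ω) := by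
        ext ω
        simp only [Set.mem_setOf_eq, Set.mem_empty_iff_false, iff_false, not_le]
        exact lt_of_lt_of_le hu (Finset.sum_nonneg fun i _ => by positivity)
      simp [hempty]
    · have hY : {ω | (∑ i, (Y i ω : ℝ)) ≤ u} = {ω | ∑ i, Y i ω ≤ ⌊u⌋₊} := by
        ext ω
        rw [Set.mem_setOf_eq, Set.mem_setOf_eq, ← Nat.cast_sum, ← Nat.le_floor_iff hu]
      have hX : {ω | (∑ i, (X i ω : ℝ)) ≤ u} = {ω | ∑ i, X i ω ≤ ⌊u⌋₊} := by
        ext ω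
        rw [Set.mem_setOf_eq, Set.mem_setOf_eq, ← Nat.cast_sum, ← Nat.le_floor_iff hu]
      rw [hY, hX]
      exact part1nat _
  · have hcast : ∀ (Z : Fin r → Ω → ℕ) (ω : Ω),
        (∑ i, (Z i ω : ℝ≥0∞)) = ((∑ i, Z i ω : ℕ) : ℝ≥0∞) :=
      fun Z ω => (Nat.cast_sum _ _).symm
    rw [lintegral_congr (hcast X), lintegral_congr (hcast Y),
      sd_layer μ hXsum, sd_layer μ hYsum]
    refine ENNReal.tsum_le_tsum fun k => ?_
    have hcX : {ω | k < ∑ i, X i ω} = {ω | ∑ i, X i ω ≤ k}ᶜ := by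
      ext ω; simp [not_le]
    have hcY : {ω | k < ∑ i, Y i ω} = {ω | ∑ i, Y i ω ≤ k}ᶜ := by
      ext ω; simp [not_le]
    have hmX : MeasurableSet {ω | ∑ i, X i ω ≤ k} :=
      hXsum ((Set.to_countable {j : ℕ | j ≤ k}).measurableSet)
    have hmY : MeasurableSet {ω | ∑ i, Y i ω ≤ k} :=
      hYsum ((Set.to_countable {j : ℕ | j ≤ k}).measurableSet)
    rw [hcX, hcY, measure_compl hmX (measure_ne_top μ _), measure_compl hmY (measure_ne_top μ _)]
    exact tsub_le_tsub_left (part1nat k) _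
end

section
/- Let x_1, ..., x_n be i.i.d. ℝ^d-valued random vectors with common law absolutely continuous with respect to Lebesgue measure. Let S be a d × n incremental selection matrix (each row introduces at least one item not appearing in earlier rows). Then with probability 1, the d × d matrix S·Xᵀ (whose i-th row is x_{p_i} - x_{q_i}) is invertible, where X is the d × n matrix with columns x_1, ..., x_n. -/
open MeasureTheory ProbabilityTheory


lemma aux_mv_null_fin : ∀ (m : ℕ) (P : MvPolynomial (Fin m) ℝ), P ≠ 0 →
    (volume : Measure (Fin m → ℝ)) {y | MvPolynomial.eval y P = 0} = 0 := by
  intro m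
  induction m with
  | zero =>
    intro P hP
    obtain ⟨c, rfl⟩ := MvPolynomial.C_surjective (Fin 0) P
    have hc : c ≠ 0 := fun h => hP (by simp [h])
    have : {y : Fin 0 → ℝ | MvPolynomial.eval y (MvPolynomial.C c) = 0} = ∅ := by
      ext y; simp [hc]
    rw [this]; simp
  | succ m ih =>
    intro P hP
    set Q := MvPolynomial.finSuccEquiv ℝ m P with hQdef
    have hQ0 : Q ≠ 0 := by simpa [hQdef] using hP
    have hL : Q.leadingCoeff ≠ 0 := Polynomial.leadingCoeff_ne_zero.mpr hQ0
    have hN : (volume : Measure (Fin m → ℝ))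
        {s | MvPolynomial.eval s Q.leadingCoeff = 0} = 0 := ih _ hL
    have hA : MeasurableSet {y : Fin (m+1) → ℝ | MvPolynomial.eval y P = 0} :=
      measurableSet_eq_fun (MvPolynomial.continuous_eval (p := P)).measurable
        measurable_const
    set e := MeasurableEquiv.piFinSuccAbove (fun _ : Fin (m+1) => ℝ) 0 with he
    have hmp := measurePreserving_piFinSuccAbove (fun _ : Fin (m+1) => (volume : Measure ℝ)) 0
    have h1 := (MeasurePreserving.symm e hmp).measure_preimage
      (s := {y : Fin (m+1) → ℝ | MvPolynomial.eval y P = 0}) hA.nullMeasurableSet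
    simp only [← volume_pi] at h1
    rw [← h1]
    set B := e.symm ⁻¹' {y : Fin (m+1) → ℝ | MvPolynomial.eval y P = 0} with hBdef
    have hB : MeasurableSet B := e.symm.measurable hA
    rw [Measure.prod_apply_symm hB]
    have hae : ∀ᵐ s : Fin m → ℝ, MvPolynomial.eval s Q.leadingCoeff ≠ 0 := by
      rw [ae_iff]
      simpa using hN
    have hz : (fun s : Fin m → ℝ => volume ((fun a => (a, s)) ⁻¹' B))
        =ᵐ[volume] (fun _ => 0) := by
      filter_upwards [hae] with s hs
      have hq : Polynomial.map (MvPolynomial.eval s) Q ≠ 0 := by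
        intro h
        apply hs
        rw [← Polynomial.coeff_natDegree, ← Polynomial.coeff_map (MvPolynomial.eval s), h,
          Polynomial.coeff_zero]
      have hset : ((fun a => (a, s)) ⁻¹' B)
          = {a : ℝ | Polynomial.eval a (Polynomial.map (MvPolynomial.eval s) Q) = 0} := by
        ext a
        simp only [hBdef, Set.mem_preimage, Set.mem_setOf_eq, he,
          MeasurableEquiv.piFinSuccAbove_symm_apply, Fin.insertNthEquiv_apply,
          Fin.insertNthEquiv, Equiv.coe_fn_mk, Fin.insertNth_zero']
        rw [MvPolynomial.eval_eq_eval_mv_eval']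
      rw [hset]
      exact (Polynomial.finite_setOf_isRoot hq).measure_zero _
    rw [lintegral_congr_ae hz, lintegral_zero]



lemma aux_mv_null {σ : Type*} [Fintype σ] (P : MvPolynomial σ ℝ) (hP : P ≠ 0) :
    Measure.pi (fun _ : σ => (volume : Measure ℝ)) {g | MvPolynomial.eval g P = 0} = 0 := by
  classical
  set m := Fintype.card σ
  set eα : Fin m ≃ σ := (Fintype.equivFin σ).symm with heα
  set T := MeasurableEquiv.arrowCongr' eα (MeasurableEquiv.refl ℝ) with hT
  have hmp : MeasurePreserving T (Measure.pi fun _ : Fin m => (volume : Measure ℝ))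
      (Measure.pi fun _ : σ => (volume : Measure ℝ)) :=
    measurePreserving_arrowCongr' (fun _ => volume) (fun _ => volume) eα
      (MeasurableEquiv.refl ℝ) (fun _ => MeasurePreserving.id _)
  have hAm : MeasurableSet {g : σ → ℝ | MvPolynomial.eval g P = 0} :=
    measurableSet_eq_fun (MvPolynomial.continuous_eval (p := P)).measurable measurable_const
  rw [← hmp.measure_preimage hAm.nullMeasurableSet]
  have hren : (MvPolynomial.rename eα.symm) P ≠ 0 := fun h =>
    hP (MvPolynomial.rename_injective _ eα.symm.injective (by simpa using h))
  have : (T ⁻¹' {g : σ → ℝ | MvPolynomial.eval g P = 0})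
      = {h : Fin m → ℝ | MvPolynomial.eval h (MvPolynomial.rename eα.symm P) = 0} := by
    ext h
    simp only [Set.mem_preimage, Set.mem_setOf_eq, MvPolynomial.eval_rename]
    have : (T h : σ → ℝ) = h ∘ eα.symm := by
      funext i
      simp [hT, MeasurableEquiv.arrowCongr', Equiv.arrowCongr']
    rw [this]
  rw [this, ← volume_pi]
  exact aux_mv_null_fin m _ hren

lemma aux_pi_ac {E : Type*} [MeasurableSpace E] {ν μ0 : Measure E} [SigmaFinite ν]
    [SigmaFinite μ0] (h : ν ≪ μ0) :
    ∀ n : ℕ, (Measure.pi fun _ : Fin n => ν) ≪ (Measure.pi fun _ : Fin n => μ0) := by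
  intro n
  induction n with
  | zero => rw [Measure.pi_of_empty, Measure.pi_of_empty]
  | succ n ih =>
    set e := MeasurableEquiv.piFinSuccAbove (fun _ : Fin (n+1) => E) 0 with he
    have h1 := (MeasurePreserving.symm e
      (measurePreserving_piFinSuccAbove (fun _ : Fin (n+1) => ν) 0)).map_eq
    have h2 := (MeasurePreserving.symm e
      (measurePreserving_piFinSuccAbove (fun _ : Fin (n+1) => μ0) 0)).map_eq
    rw [← h1, ← h2]
    exact (Measure.AbsolutelyContinuous.prod h ih).map e.symm.measurable


lemma aux_joint {Ω : Type*} [MeasurableSpace Ω] (μ : Measure Ω) [IsProbabilityMeasure μ]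
    {n : ℕ} {E : Type*} [MeasurableSpace E] (x : Fin n → Ω → E) (hxm : ∀ i, Measurable (x i))
    (hind : iIndepFun x μ)
    (ν : Measure E) [IsProbabilityMeasure ν] (hid : ∀ i, μ.map (x i) = ν) :
    μ.map (fun ω i => x i ω) = Measure.pi (fun _ : Fin n => ν) := by
  refine (Measure.pi_eq (μ := fun _ : Fin n => ν) fun s hs => ?_).symm
  have hX : Measurable (fun ω i => x i ω) := measurable_pi_lambda _ hxm
  rw [Measure.map_apply hX (MeasurableSet.univ_pi hs)]
  have hpre : (fun ω i => x i ω) ⁻¹' Set.univ.pi s = ⋂ i, x i ⁻¹' s i := by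
    ext ω; simp [Set.mem_univ_pi]
  rw [hpre, hind.meas_iInter fun i => ⟨s i, hs i, rfl⟩]
  refine Finset.prod_congr rfl fun i _ => ?_
  rw [← hid i, Measure.map_apply (hxm i) (hs i)]

lemma aux_uncurry (n d : ℕ) :
    (volume : Measure (Fin n → Fin d → ℝ)).map
      (fun y (kj : Fin n × Fin d) => y kj.1 kj.2)
      = Measure.pi (fun _ : Fin n × Fin d => (volume : Measure ℝ)) := by
  refine (Measure.pi_eq (μ := fun _ : Fin n × Fin d => (volume : Measure ℝ)) fun s hs => ?_).symm
  have hmeas : Measurable (fun (y : Fin n → Fin d → ℝ) (kj : Fin n × Fin d) => y kj.1 kj.2) :=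
    measurable_pi_lambda _ fun kj => (measurable_pi_apply kj.2).comp (measurable_pi_apply kj.1)
  rw [Measure.map_apply hmeas (MeasurableSet.univ_pi hs)]
  have hpre : (fun (y : Fin n → Fin d → ℝ) (kj : Fin n × Fin d) => y kj.1 kj.2) ⁻¹' Set.univ.pi s
      = Set.univ.pi (fun k => Set.univ.pi fun j => s (k, j)) := by
    ext y
    simp only [Set.mem_preimage, Set.mem_univ_pi, Prod.forall]
  rw [hpre, volume_pi, Measure.pi_pi]
  simp_rw [volume_pi, Measure.pi_pi]
  rw [Fintype.prod_prod_type]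

/-- If `x_1, ..., x_n` are i.i.d. `ℝ^d`-valued random vectors with absolutely continuous
common law, and `S` is a `d × n` incremental selection matrix with rows `e_{p_i} - e_{q_i}`,
then the `d × d` matrix with `i`-th row `x_{p_i} - x_{q_i}` is almost surely invertible. -/
theorem incremental_matrix_invertible {d n : ℕ} {Ω : Type*} [MeasurableSpace Ω]
    (μ : Measure Ω) [IsProbabilityMeasure μ]
    (x : Fin n → Ω → (Fin d → ℝ)) (hxm : ∀ i, Measurable (x i))
    (hind : iIndepFun x μ)
    (ν : Measure (Fin d → ℝ)) (hid : ∀ i, μ.map (x i) = ν)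
    (hac : ν ≪ (volume : Measure (Fin d → ℝ)))
    (p q : Fin d → Fin n) (hpq : ∀ i, p i ≠ q i)
    (hinc : ∀ i : Fin d,
      (∀ j, j < i → p i ≠ p j ∧ p i ≠ q j) ∨ (∀ j, j < i → q i ≠ p j ∧ q i ≠ q j)) :
    μ {ω | (Matrix.of fun i k => x (p i) ω k - x (q i) ω k).det ≠ 0} = 1 := by
  classical
  rcases Nat.eq_zero_or_pos d with hd0 | hdpos
  · subst hd0
    have huniv : {ω | (Matrix.of fun i k => x (p i) ω k - x (q i) ω k).det ≠ 0}
        = Set.univ := by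
      ext ω; simp [Matrix.det_fin_zero]
    rw [huniv]; exact measure_univ
  have i0 : Fin d := ⟨0, hdpos⟩
  haveI hνp : IsProbabilityMeasure ν := by
    rw [← hid (p i0)]; exact Measure.isProbabilityMeasure_map (hxm _).aemeasurable
  -- fresh / other indices
  set cond : Fin d → Prop := fun i => ∀ j, j < i → p i ≠ p j ∧ p i ≠ q j with hcond
  set fr : Fin d → Fin n := fun i => if cond i then p i else q i with hfr
  set ot : Fin d → Fin n := fun i => if cond i then q i else p i with hot
  have hfrp : ∀ i, cond i → fr i = p i := fun i h => by simp only [hfr]; rw [if_pos h]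
  have hfrq : ∀ i, ¬cond i → fr i = q i := fun i h => by simp only [hfr]; rw [if_neg h]
  have hotq : ∀ i, cond i → ot i = q i := fun i h => by simp only [hot]; rw [if_pos h]
  have hotp : ∀ i, ¬cond i → ot i = p i := fun i h => by simp only [hot]; rw [if_neg h]
  have hfresh : ∀ i j, j < i → fr i ≠ p j ∧ fr i ≠ q j := by
    intro i
    by_cases h : cond i
    · rw [hfrp i h]; exact fun j hj => h j hj
    · have h2 := (hinc i).resolve_left h
      rw [hfrq i h]; exact fun j hj => h2 j hj
  have hfo : ∀ i, fr i ≠ ot i := by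
    intro i
    by_cases h : cond i
    · rw [hfrp i h, hotq i h]; exact hpq i
    · rw [hfrq i h, hotp i h]; exact (hpq i).symm
  -- witness construction
  have key : ∀ k : ℕ, k ≤ d → ∃ w : Fin n → Fin d → ℝ,
      ∀ i : Fin d, (i : ℕ) < k → w (fr i) - w (ot i) = Pi.single i 1 := by
    intro k
    induction k with
    | zero => exact fun _ => ⟨0, fun i hi => absurd hi (Nat.not_lt_zero _)⟩
    | succ k ihk =>
      intro hk
      obtain ⟨w, hw⟩ := ihk (Nat.le_of_succ_le hk)
      set ik : Fin d := ⟨k, hk⟩ with hik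
      refine ⟨Function.update w (fr ik) (Pi.single ik 1 + w (ot ik)), fun i hi => ?_⟩
      rcases Nat.lt_succ_iff_lt_or_eq.mp hi with hik' | hik'
      · have hlt : i < ik := hik'
        have h1 : fr i ≠ fr ik := by
          intro hEq
          rcases hfresh ik i hlt with ⟨ha, hb⟩
          by_cases h : cond i
          · exact ha (by rw [← hEq]; exact hfrp i h)
          · exact hb (by rw [← hEq]; exact hfrq i h)
        have h2 : ot i ≠ fr ik := by
          intro hEq
          rcases hfresh ik i hlt with ⟨ha, hb⟩
          by_cases h : cond i
          · exact hb (by rw [← hEq]; exact hotq i h)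
          · exact ha (by rw [← hEq]; exact hotp i h)
        rw [Function.update_of_ne h1, Function.update_of_ne h2]
        exact hw i hik'
      · have hieq : i = ik := Fin.ext hik'
        rw [hieq, Function.update_self, Function.update_of_ne (Ne.symm (hfo ik))]
        abel
  obtain ⟨w, hw⟩ := key d le_rfl
  set ε : Fin d → ℝ := fun i => if cond i then 1 else -1 with hε
  have hMdiag : (Matrix.of fun i k => w (p i) k - w (q i) k) = Matrix.diagonal ε := by
    ext i k
    have hwi := hw i i.isLt
    by_cases h : cond i
    · have hp' : fr i = p i := hfrp i h
      have hq' : ot i = q i := hotq i h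
      have := congrFun hwi k
      rw [hp', hq'] at this
      simp only [Pi.sub_apply] at this
      simp only [Matrix.of_apply, Matrix.diagonal_apply, hε, if_pos h, this,
        Pi.single_apply]
      by_cases hik : i = k <;> simp [hik, eq_comm]
    · have hp' : fr i = q i := hfrq i h
      have hq' : ot i = p i := hotp i h
      have := congrFun hwi k
      rw [hp', hq'] at this
      simp only [Pi.sub_apply] at this
      have this2 : w (p i) k - w (q i) k = -(Pi.single (M := fun _ => ℝ) i 1 k) := by
        rw [← this]; ring
      simp only [Matrix.of_apply, Matrix.diagonal_apply, hε, if_neg h, this2,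
        Pi.single_apply]
      by_cases hik : i = k <;> simp [hik, eq_comm]
  have hdet : (Matrix.of fun i k => w (p i) k - w (q i) k).det ≠ 0 := by
    rw [hMdiag, Matrix.det_diagonal]
    refine Finset.prod_ne_zero_iff.mpr fun i _ => ?_
    by_cases h : cond i
    · simp only [hε]; rw [if_pos h]; norm_num
    · simp only [hε]; rw [if_neg h]; norm_num
  -- the polynomial
  set P : MvPolynomial (Fin n × Fin d) ℝ :=
    (Matrix.of fun i k => (MvPolynomial.X (p i, k) : MvPolynomial (Fin n × Fin d) ℝ)
      - MvPolynomial.X (q i, k)).det with hP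
  have heval : ∀ g : Fin n × Fin d → ℝ,
      MvPolynomial.eval g P = (Matrix.of fun i k => g (p i, k) - g (q i, k)).det := by
    intro g
    rw [hP, RingHom.map_det]
    congr 1
    ext i k
    simp [Matrix.map_apply]
  have hPne : P ≠ 0 := by
    intro h
    apply hdet
    have := heval (fun kj => w kj.1 kj.2)
    rw [h, map_zero] at this
    exact this.symm
  -- measure-zero bad set
  set Bad : Set (Fin n → Fin d → ℝ) :=
    {y | (Matrix.of fun i k => y (p i) k - y (q i) k).det = 0} with hBad
  have hcont : Continuous fun (y : Fin n → Fin d → ℝ) =>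
      (Matrix.of fun i k => y (p i) k - y (q i) k).det := by
    apply Continuous.matrix_det
    apply continuous_pi; intro i; apply continuous_pi; intro k
    simp only [Matrix.of_apply]
    exact ((continuous_apply k).comp (continuous_apply (p i))).sub
      ((continuous_apply k).comp
        (continuous_apply (q i) : Continuous fun y : Fin n → Fin d → ℝ => y (q i)))
  have hBadm : MeasurableSet Bad :=
    measurableSet_eq_fun hcont.measurable measurable_const
  have hZm : MeasurableSet {g : Fin n × Fin d → ℝ | MvPolynomial.eval g P = 0} :=
    measurableSet_eq_fun (MvPolynomial.continuous_eval (p := P)).measurable measurable_const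
  have hmeas : Measurable (fun (y : Fin n → Fin d → ℝ) (kj : Fin n × Fin d) => y kj.1 kj.2) :=
    measurable_pi_lambda _ fun kj => (measurable_pi_apply kj.2).comp (measurable_pi_apply kj.1)
  have hvol : (volume : Measure (Fin n → Fin d → ℝ)) Bad = 0 := by
    have hpre : Bad = (fun (y : Fin n → Fin d → ℝ) (kj : Fin n × Fin d) => y kj.1 kj.2)
        ⁻¹' {g | MvPolynomial.eval g P = 0} := by
      ext y
      simp only [hBad, Set.mem_preimage, Set.mem_setOf_eq, heval]
    rw [hpre, ← Measure.map_apply hmeas hZm, aux_uncurry, aux_mv_null P hPne]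
  have hpiν : (Measure.pi fun _ : Fin n => ν) Bad = 0 := by
    refine aux_pi_ac hac n ?_
    rw [← volume_pi]
    exact hvol
  -- conclusion
  have hXm : Measurable (fun ω (k : Fin n) => x k ω) := measurable_pi_lambda _ hxm
  have hev : μ ((fun ω k => x k ω) ⁻¹' Bad) = 0 := by
    rw [← Measure.map_apply hXm hBadm, aux_joint μ x hxm hind ν hid, hpiν]
  have hsets : {ω | (Matrix.of fun i k => x (p i) ω k - x (q i) ω k).det ≠ 0}
      = ((fun ω k => x k ω) ⁻¹' Bad)ᶜ := by
    ext ω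
    simp [hBad]
  rw [hsets, measure_compl (hXm hBadm) (measure_ne_top μ _), hev, measure_univ]
  simp
end
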